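/- (Beltrami formula in H₃, Theorem 2.2.1 / identity (2.10)) For every smooth function f : D → ℝ the following identity holds on D: P_x + Q_y + Q²·P_x + P²·Q_y − P·Q − 2P·Q·Q_x = W·(E·N − 2F·M + G·L); equivalently, 2H = (1/W³)(P_x + Q_y + Q²P_x + P²Q_y − PQ − 2PQ·Q_x). (This is the scalar form of the Beltrami formula Δr = 2H for graph surfaces in the Heisenberg group H₃.) -/

import Mathlib

noncomputable section

/-- Partial derivative with respect to the first (x) variable. -/
def pdx (f : ℝ × ℝ → ℝ) : ℝ × ℝ → ℝ := fun p => fderiv ℝ f p (1, 0)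

/-- Partial derivative with respect to the second (y) variable. -/
def pdy (f : ℝ × ℝ → ℝ) : ℝ × ℝ → ℝ := fun p => fderiv ℝ f p (0, 1)

/-- `P = f_x + y/2`. -/
def Pf (f : ℝ × ℝ → ℝ) : ℝ × ℝ → ℝ := fun p => pdx f p + p.2 / 2

/-- `Q = f_y - x/2`. -/
def Qf (f : ℝ × ℝ → ℝ) : ℝ × ℝ → ℝ := fun p => pdy f p - p.1 / 2

/-- First fundamental form coefficient `E = 1 + P²`. -/
def Ef (f : ℝ × ℝ → ℝ) : ℝ × ℝ → ℝ := fun p => 1 + Pf f p ^ 2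

/-- First fundamental form coefficient `F = P·Q`. -/
def Ff (f : ℝ × ℝ → ℝ) : ℝ × ℝ → ℝ := fun p => Pf f p * Qf f p

/-- First fundamental form coefficient `G = 1 + Q²`. -/
def Gf (f : ℝ × ℝ → ℝ) : ℝ × ℝ → ℝ := fun p => 1 + Qf f p ^ 2

/-- `W = √(EG − F²) = √(1 + P² + Q²)`. -/
def Wf (f : ℝ × ℝ → ℝ) : ℝ × ℝ → ℝ := fun p => Real.sqrt (1 + Pf f p ^ 2 + Qf f p ^ 2)

/-- Second fundamental form coefficient `L = (f_xx + PQ)/W`. -/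
def Lf (f : ℝ × ℝ → ℝ) : ℝ × ℝ → ℝ := fun p => (pdx (pdx f) p + Pf f p * Qf f p) / Wf f p

/-- Second fundamental form coefficient `M = (f_xy + (Q² − P²)/2)/W`. -/
def Mf (f : ℝ × ℝ → ℝ) : ℝ × ℝ → ℝ :=
  fun p => (pdx (pdy f) p + (Qf f p ^ 2 - Pf f p ^ 2) / 2) / Wf f p

/-- Second fundamental form coefficient `N = (f_yy − PQ)/W`. -/
def Nf (f : ℝ × ℝ → ℝ) : ℝ × ℝ → ℝ := fun p => (pdy (pdy f) p - Pf f p * Qf f p) / Wf f p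

/-- Mean curvature `H = (EN − 2FM + GL)/(2W²)`. -/
def Hf (f : ℝ × ℝ → ℝ) : ℝ × ℝ → ℝ :=
  fun p => (Ef f p * Nf f p - 2 * Ff f p * Mf f p + Gf f p * Lf f p) / (2 * Wf f p ^ 2)

/-- The Laplace–Beltrami operator of the graph of `f`, with the sign convention
`Δφ = −(1/W)[∂_x((G φ_x − F φ_y)/W) + ∂_y((−F φ_x + E φ_y)/W)]`. -/
def lapS (f φ : ℝ × ℝ → ℝ) : ℝ × ℝ → ℝ := fun p =>
  -(1 / Wf f p) *
    (pdx (fun q => (Gf f q * pdx φ q - Ff f q * pdy φ q) / Wf f q) p +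
     pdy (fun q => (-(Ff f q) * pdx φ q + Ef f q * pdy φ q) / Wf f q) p)

/-- Mean curvature in the form `H = (f_xx + f_yy)/(2W³)`. -/
def Hm (f : ℝ × ℝ → ℝ) : ℝ × ℝ → ℝ :=
  fun p => (pdx (pdx f) p + pdy (pdy f) p) / (2 * Wf f p ^ 3)

/-- `H₁ = (f_xx + f_yy)/W`. -/
def H1f (f : ℝ × ℝ → ℝ) : ℝ × ℝ → ℝ :=
  fun p => (pdx (pdx f) p + pdy (pdy f) p) / Wf f p

/-- `b - 1/2` stands for `Q_x = f_xy − 1/2`, the only trace of the Heisenberg twist. Each of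
`L, M, N` carries a factor `1/W` that the prefactor `W` cancels, and the cubic terms in `P, Q`
cancel each other. -/
lemma beltrami_identity (P Q a b c W : ℝ) (hW : W ≠ 0) :
    a + c + Q ^ 2 * a + P ^ 2 * c - P * Q - 2 * P * Q * (b - 1 / 2) =
      W * ((1 + P ^ 2) * ((c - P * Q) / W) - 2 * (P * Q) * ((b + (Q ^ 2 - P ^ 2) / 2) / W) +
        (1 + Q ^ 2) * ((a + P * Q) / W)) := by
  field_simp
  ring

lemma Wf_pos (f : ℝ × ℝ → ℝ) (p : ℝ × ℝ) : 0 < Wf f p :=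
  Real.sqrt_pos.mpr (by positivity)

section PartialDerivatives

variable {f : ℝ × ℝ → ℝ} {p : ℝ × ℝ}

lemma ContDiffAt.differentiableAt_fderiv_apply (hf : ContDiffAt ℝ 2 f p) (v : ℝ × ℝ) :
    DifferentiableAt ℝ (fun q => fderiv ℝ f q v) p :=
  ((hf.fderiv_right (m := 1) (by norm_num)).differentiableAt one_ne_zero).clm_apply
    (differentiableAt_const v)

lemma pdx_Pf (h : DifferentiableAt ℝ (pdx f) p) : pdx (Pf f) p = pdx (pdx f) p := by
  change fderiv ℝ (fun q => pdx f q + q.2 / 2) p (1, 0) = _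
  rw [fderiv_fun_add h (by fun_prop)]
  simp [pdx, div_eq_mul_inv, fderiv_mul_const, fderiv_snd]

lemma pdy_Qf (h : DifferentiableAt ℝ (pdy f) p) : pdy (Qf f) p = pdy (pdy f) p := by
  change fderiv ℝ (fun q => pdy f q - q.1 / 2) p (0, 1) = _
  rw [fderiv_fun_sub h (by fun_prop)]
  simp [pdy, div_eq_mul_inv, fderiv_mul_const, fderiv_fst]

lemma pdx_Qf (h : DifferentiableAt ℝ (pdy f) p) : pdx (Qf f) p = pdx (pdy f) p - 1 / 2 := by
  change fderiv ℝ (fun q => pdy f q - q.1 / 2) p (1, 0) = _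
  rw [fderiv_fun_sub h (by fun_prop)]
  simp [pdx, div_eq_mul_inv, fderiv_mul_const, fderiv_fst]

end PartialDerivatives

lemma beltrami_numerator_eq {f : ℝ × ℝ → ℝ} {p : ℝ × ℝ} (hf : ContDiffAt ℝ 2 f p) :
    pdx (Pf f) p + pdy (Qf f) p + Qf f p ^ 2 * pdx (Pf f) p +
        Pf f p ^ 2 * pdy (Qf f) p - Pf f p * Qf f p -
        2 * Pf f p * Qf f p * pdx (Qf f) p =
      Wf f p * (Ef f p * Nf f p - 2 * Ff f p * Mf f p + Gf f p * Lf f p) := by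
  have hx : DifferentiableAt ℝ (pdx f) p := hf.differentiableAt_fderiv_apply (1, 0)
  have hy : DifferentiableAt ℝ (pdy f) p := hf.differentiableAt_fderiv_apply (0, 1)
  rw [pdx_Pf hx, pdy_Qf hy, pdx_Qf hy]
  exact beltrami_identity _ _ _ _ _ _ (Wf_pos f p).ne'

lemma two_mul_Hf (f : ℝ × ℝ → ℝ) (p : ℝ × ℝ) :
    2 * Hf f p =
      1 / Wf f p ^ 3 * (Wf f p * (Ef f p * Nf f p - 2 * Ff f p * Mf f p + Gf f p * Lf f p)) := by
  have hW := (Wf_pos f p).ne'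
  simp only [Hf]
  field_simp

theorem beltrami_formula_heisenberg
    (D : Set (ℝ × ℝ)) (hD : IsOpen D)
    (f : ℝ × ℝ → ℝ) (hf : ContDiffOn ℝ (⊤ : ℕ∞) f D) :
    ∀ p ∈ D,
      (pdx (Pf f) p + pdy (Qf f) p + Qf f p ^ 2 * pdx (Pf f) p +
          Pf f p ^ 2 * pdy (Qf f) p - Pf f p * Qf f p -
          2 * Pf f p * Qf f p * pdx (Qf f) p =
        Wf f p * (Ef f p * Nf f p - 2 * Ff f p * Mf f p + Gf f p * Lf f p)) ∧
      (2 * Hf f p =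
        (1 / Wf f p ^ 3) *
          (pdx (Pf f) p + pdy (Qf f) p + Qf f p ^ 2 * pdx (Pf f) p +
            Pf f p ^ 2 * pdy (Qf f) p - Pf f p * Qf f p -
            2 * Pf f p * Qf f p * pdx (Qf f) p)) := by
  intro p hp
  have hf2 : ContDiffAt ℝ 2 f p :=
    (hf.contDiffAt (hD.mem_nhds hp)).of_le (WithTop.coe_le_coe.mpr le_top)
  have hnum := beltrami_numerator_eq hf2
  exact ⟨hnum, hnum ▸ two_mul_Hf f p⟩
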